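/- Let K := Frac(ℂ[u, v]) be the fraction field of the polynomial ring in two variables u, v over ℂ, and let R₁ ⊂ K be the ℂ-subalgebra generated by u/v and 1/v. Set K₁₂ := [[−u/v, (u/v)² + 1/v],[1, −u/v]] and G~ := K₁₂² · [[(1/v)², 0],[0, 1/v]], 2×2 matrices over K. Then the set of pairs (s₁, s₂) of polynomials in ℂ[u, v] such that both entries of the column vector G~ · (s₁, s₂)ᵗ lie in R₁ is a ℂ-linear subspace of ℂ[u, v] × ℂ[u, v] of dimension 15. -/

import Mathlib

/-- `K = Frac(ℂ[u,v])`, the fraction field of the polynomial ring in two variables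
(`u = X 0`, `v = X 1`). -/
noncomputable abbrev KK : Type := FractionRing (MvPolynomial (Fin 2) ℂ)

/-- `u ∈ K`. -/
noncomputable def uu : KK := algebraMap (MvPolynomial (Fin 2) ℂ) KK (MvPolynomial.X 0)

/-- `v ∈ K`. -/
noncomputable def vv : KK := algebraMap (MvPolynomial (Fin 2) ℂ) KK (MvPolynomial.X 1)

/-- `R₁ ⊂ K`, the `ℂ`-subalgebra generated by `u/v` and `1/v` (the coordinate ring of the
chart `U₁` of `ℙ²` inside `ℂ(ℙ²)`). -/
noncomputable def R₁ : Subalgebra ℂ KK := Algebra.adjoin ℂ {uu / vv, 1 / vv}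

/-- The transition factor `K₁₂ = !![−u/v, (u/v)² + 1/v; 1, −u/v]`. -/
noncomputable def K₁₂ : Matrix (Fin 2) (Fin 2) KK :=
  !![-(uu / vv), (uu / vv) ^ 2 + 1 / vv; 1, -(uu / vv)]

/-- The transition function `G~ = K₁₂² * !![(1/v)², 0; 0, 1/v]` of `φ_*O_X(4,2)`. -/
noncomputable def Gt : Matrix (Fin 2) (Fin 2) KK :=
  K₁₂ ^ 2 * !![(1 / vv) ^ 2, 0; 0, 1 / vv]

/-!
Since `R₁ = ℂ[u/v, 1/v]`, a fraction `p / vᵈ` lies in `R₁` exactly when `deg p ≤ d`. As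
`G~ (s₁, s₂)ᵗ = (P / v⁴, Q / v³)` with `P = (2u² + v) s₁ - 2u(u² + v) s₂` and
`Q = (2u² + v) s₂ - 2u s₁`, the condition is `deg P ≤ 4` and `deg Q ≤ 3`. In the coordinates
`a = s₁ - u s₂`, `b = s₂` one has `Q = v b - 2u a` and `P = v a - u Q`, so the condition reads:
`a`, `b` are of degree `≤ 3` and the quartic part of `v b - 2u a` vanishes. Taking that quartic
part maps the `20`-dimensional space of pairs of cubics onto the `5`-dimensional space of binary
quartics, so its kernel has dimension `15`.
-/

open MvPolynomial Module Finset Matrix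

namespace MvPolynomial

section

variable {σ R : Type*} [CommSemiring R]

theorem restrictTotalDegree_mono {m n : ℕ} (h : m ≤ n) :
    restrictTotalDegree σ R m ≤ restrictTotalDegree σ R n :=
  restrictSupport_mono R fun _ hd => le_trans hd h

theorem X_mul_mem_restrictTotalDegree_iff [IsDomain R] (i : σ) {p : MvPolynomial σ R} {n : ℕ} :
    X i * p ∈ restrictTotalDegree σ R (n + 1) ↔ p ∈ restrictTotalDegree σ R n := by
  rcases eq_or_ne p 0 with rfl | hp
  · simp
  simp only [mem_restrictTotalDegree, totalDegree_mul_of_isDomain (X_ne_zero i) hp, totalDegree_X]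
  omega

theorem mem_restrictTotalDegree_of_homogeneousComponent_eq_zero {p : MvPolynomial σ R} {n : ℕ}
    (hp : p ∈ restrictTotalDegree σ R (n + 1)) (h : homogeneousComponent (n + 1) p = 0) :
    p ∈ restrictTotalDegree σ R n := by
  rw [mem_restrictTotalDegree] at hp ⊢
  refine Finset.sup_le fun d hd => ?_
  have hle : d.degree ≤ n + 1 := (le_totalDegree hd).trans hp
  have hne : d.degree ≠ n + 1 := fun heq => by
    have := congrArg (coeff d) h
    rw [coeff_homogeneousComponent, if_pos heq, coeff_zero] at this
    exact mem_support_iff.mp hd this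
  change d.degree ≤ n
  omega

end

section

variable {σ K : Type*} [Field K]

theorem finrank_restrictSupport (s : Finset (σ →₀ ℕ)) :
    finrank K (restrictSupport K (s : Set (σ →₀ ℕ))) = #s := by
  rw [finrank_eq_nat_card_basis (basisRestrictSupport K _), Nat.card_coe_set_eq,
    Set.ncard_coe_finset]

variable [Fintype σ] [DecidableEq σ]

theorem finrank_homogeneousSubmodule (n : ℕ) :
    finrank K (homogeneousSubmodule σ K n) = (Fintype.card σ + n - 1).choose n := by
  have : {d : σ →₀ ℕ | d.degree = n} = ↑((univ : Finset σ).finsuppAntidiag n) := by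
    ext d; simp [Finsupp.degree_eq_sum]
  rw [homogeneousSubmodule_eq_finsupp_supported, this]
  exact (finrank_restrictSupport _).trans (by rw [card_finsuppAntidiag_nat_eq_choose, card_univ])

theorem finrank_restrictTotalDegree (n : ℕ) :
    finrank K (restrictTotalDegree σ K n) =
      ∑ k ∈ range (n + 1), (Fintype.card σ + k - 1).choose k := by
  have : {d : σ →₀ ℕ | (d.sum fun _ e => e) ≤ n} =
      ↑((range (n + 1)).biUnion fun k => (univ : Finset σ).finsuppAntidiag k) := by
    ext d; simp [Finsupp.sum_fintype]
  rw [restrictTotalDegree, this, finrank_restrictSupport, card_biUnion]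
  · simp [card_finsuppAntidiag_nat_eq_choose]
  · intro i _ j _ hij
    rw [Function.onFun, Finset.disjoint_left]
    intro d hi hj
    simp only [mem_finsuppAntidiag] at hi hj
    exact hij (hi.1.symm.trans hj.1)

end

end MvPolynomial

abbrev MP : Type := MvPolynomial (Fin 2) ℂ

local notation "𝓟" => restrictTotalDegree (Fin 2) ℂ

local notation "ψ" => algebraMap MP KK

theorem vv_ne_zero : vv ≠ 0 :=
  (IsFractionRing.injective MP KK).ne_iff' (map_zero _) |>.2 (X_ne_zero 1)

theorem monomial_div_vv_pow_mem_R₁ {m : Fin 2 →₀ ℕ} {d : ℕ} (hm : m 0 + m 1 ≤ d) (c : ℂ) :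
    ψ (monomial m c) / vv ^ d ∈ R₁ := by
  have hu : uu / vv ∈ R₁ := Algebra.subset_adjoin (by simp)
  have hw : 1 / vv ∈ R₁ := Algebra.subset_adjoin (by simp)
  obtain ⟨e, rfl⟩ := Nat.exists_eq_add_of_le hm
  have key : ψ (monomial m c) / vv ^ (m 0 + m 1 + e) =
      algebraMap ℂ KK c * ((uu / vv) ^ m 0 * (1 / vv) ^ e) := by
    have hv : ψ (X 1) ≠ 0 := vv_ne_zero
    rw [monomial_eq, Finsupp.prod_fintype _ _ (by simp), Fin.prod_univ_two,
      IsScalarTower.algebraMap_apply ℂ MP KK, algebraMap_eq]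
    simp only [uu, vv, map_mul, map_pow, div_pow, one_pow, pow_add]
    field_simp
  rw [key]
  exact mul_mem (Subalgebra.algebraMap_mem _ _) (mul_mem (pow_mem hu _) (pow_mem hw _))

theorem exists_eq_div_vv_pow_of_mem_R₁ {x : KK} (hx : x ∈ R₁) :
    ∃ (q : MP) (e : ℕ), q.totalDegree ≤ e ∧ x = ψ q / vv ^ e := by
  have hv : vv ≠ 0 := vv_ne_zero
  induction hx using Algebra.adjoin_induction with
  | mem x hx =>
    rcases hx with rfl | rfl
    · exact ⟨X 0, 1, by simp [totalDegree_X], by simp [uu]⟩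
    · exact ⟨1, 1, by simp, by simp⟩
  | algebraMap c =>
    exact ⟨C c, 0, by simp, by simp [IsScalarTower.algebraMap_apply ℂ MP KK, algebraMap_eq]⟩
  | add x y _ _ hx hy =>
    obtain ⟨q₁, e₁, hq₁, rfl⟩ := hx
    obtain ⟨q₂, e₂, hq₂, rfl⟩ := hy
    refine ⟨q₁ * X 1 ^ e₂ + q₂ * X 1 ^ e₁, e₁ + e₂, ?_, ?_⟩
    · refine (totalDegree_add _ _).trans (max_le ?_ ?_) <;>
        refine (totalDegree_mul _ _).trans ?_ <;> rw [totalDegree_X_pow] <;> omega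
    · simp only [map_add, map_mul, map_pow, vv, pow_add] at hv ⊢
      field_simp
  | mul x y _ _ hx hy =>
    obtain ⟨q₁, e₁, hq₁, rfl⟩ := hx
    obtain ⟨q₂, e₂, hq₂, rfl⟩ := hy
    exact ⟨q₁ * q₂, e₁ + e₂, (totalDegree_mul _ _).trans (by omega),
      by rw [map_mul, div_mul_div_comm, ← pow_add]⟩

theorem div_vv_pow_mem_R₁_iff (p : MP) (d : ℕ) : ψ p / vv ^ d ∈ R₁ ↔ p.totalDegree ≤ d := by
  refine ⟨fun h => ?_, fun hp => ?_⟩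
  · rcases eq_or_ne p 0 with rfl | hp
    · simp
    obtain ⟨q, e, hq, he⟩ := exists_eq_div_vv_pow_of_mem_R₁ h
    have hv : vv ≠ 0 := vv_ne_zero
    have hpq : p * X 1 ^ e = q * X 1 ^ d := by
      apply IsFractionRing.injective MP KK
      rw [div_eq_div_iff (pow_ne_zero _ hv) (pow_ne_zero _ hv)] at he
      simpa [vv] using he
    have hq0 : q ≠ 0 := by
      rintro rfl
      simp [hp, X_ne_zero] at hpq
    have := congrArg totalDegree hpq
    rw [totalDegree_mul_of_isDomain hp (pow_ne_zero _ (X_ne_zero 1)),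
      totalDegree_mul_of_isDomain hq0 (pow_ne_zero _ (X_ne_zero 1)), totalDegree_X_pow,
      totalDegree_X_pow] at this
    omega
  · rw [p.as_sum, map_sum, Finset.sum_div]
    refine sum_mem fun m hm => monomial_div_vv_pow_mem_R₁ ?_ _
    have := (le_totalDegree hm).trans hp
    rwa [Finsupp.sum_fintype _ _ (by simp), Fin.sum_univ_two] at this

theorem Gt_mulVec (s : MP × MP) :
    Gt *ᵥ ![ψ s.1, ψ s.2] =
      ![ψ ((2 * X 0 ^ 2 + X 1) * s.1 - 2 * X 0 * (X 0 ^ 2 + X 1) * s.2) / vv ^ 4,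
        ψ ((2 * X 0 ^ 2 + X 1) * s.2 - 2 * X 0 * s.1) / vv ^ 3] := by
  have hv : ψ (X 1) ≠ 0 := vv_ne_zero
  rw [Gt, K₁₂, sq, mul_fin_two, mul_fin_two, cons_mulVec, cons_mulVec, empty_mulVec,
    vec2_dotProduct', vec2_dotProduct']
  simp only [uu, vv, map_sub, map_add, map_mul, map_pow, map_ofNat]
  congr 2 <;> field_simp <;> ring

noncomputable def shear : (MP × MP) ≃ₗ[ℂ] MP × MP where
  toFun s := (s.1 - X 0 * s.2, s.2)
  invFun s := (s.1 + X 0 * s.2, s.2)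
  map_add' s t := by ext1 <;> simp only [Prod.fst_add, Prod.snd_add]; ring
  map_smul' c s := by
    ext1 <;> simp only [Prod.smul_fst, Prod.smul_snd, Algebra.mul_smul_comm, RingHom.id_apply, smul_sub]
  left_inv s := by simp
  right_inv s := by simp

noncomputable def shearedNumerator : MP × MP →ₗ[ℂ] MP :=
  (X 1 : MP) • LinearMap.snd ℂ MP MP - (2 * X 0 : MP) • LinearMap.fst ℂ MP MP

@[simp] theorem shearedNumerator_apply (x : MP × MP) :
    shearedNumerator x = X 1 * x.2 - 2 * X 0 * x.1 := rfl

noncomputable def shearedSectionSpace : Submodule ℂ (MP × MP) :=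
  ((𝓟 3).prod (𝓟 3)) ⊓ (𝓟 3).comap shearedNumerator

theorem shear_mem_shearedSectionSpace_iff (s : MP × MP) :
    shear s ∈ shearedSectionSpace ↔
      ((2 * X 0 ^ 2 + X 1) * s.1 - 2 * X 0 * (X 0 ^ 2 + X 1) * s.2).totalDegree ≤ 4 ∧
        ((2 * X 0 ^ 2 + X 1) * s.2 - 2 * X 0 * s.1).totalDegree ≤ 3 := by
  set a := s.1 - X 0 * s.2
  set q := shearedNumerator (a, s.2)
  have hq : (2 * X 0 ^ 2 + X 1) * s.2 - 2 * X 0 * s.1 = q := by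
    simp only [q, a, shearedNumerator_apply]; ring
  have hp : (2 * X 0 ^ 2 + X 1) * s.1 - 2 * X 0 * (X 0 ^ 2 + X 1) * s.2 = X 1 * a - X 0 * q := by
    simp only [q, a, shearedNumerator_apply]; ring
  rw [hp, hq, ← mem_restrictTotalDegree, ← mem_restrictTotalDegree]
  change ((a ∈ 𝓟 3 ∧ s.2 ∈ 𝓟 3) ∧ q ∈ 𝓟 3) ↔ _
  constructor
  · rintro ⟨⟨ha, -⟩, hq3⟩
    exact ⟨sub_mem ((X_mul_mem_restrictTotalDegree_iff 1).2 ha)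
      ((X_mul_mem_restrictTotalDegree_iff 0).2 hq3), hq3⟩
  · rintro ⟨hp4, hq3⟩
    have hxq := (X_mul_mem_restrictTotalDegree_iff 0).2 hq3
    have ha : a ∈ 𝓟 3 := (X_mul_mem_restrictTotalDegree_iff 1).1
      (by simpa only [sub_add_cancel] using add_mem hp4 hxq)
    have hxa := (X_mul_mem_restrictTotalDegree_iff 0).2 ha
    have hb : X 1 * s.2 = q + (X 0 * a + X 0 * a) := by
      simp only [q, shearedNumerator_apply]; ring
    refine ⟨⟨ha, (X_mul_mem_restrictTotalDegree_iff 1).1 ?_⟩, hq3⟩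
    rw [hb]
    exact add_mem (restrictTotalDegree_mono (by norm_num) hq3) (add_mem hxa hxa)

theorem shearedNumerator_mem {a b : MP} (ha : a ∈ 𝓟 3) (hb : b ∈ 𝓟 3) :
    shearedNumerator (a, b) ∈ 𝓟 4 := by
  have ha' := (X_mul_mem_restrictTotalDegree_iff 0).2 ha
  rw [shearedNumerator_apply, mul_assoc, two_mul]
  exact sub_mem ((X_mul_mem_restrictTotalDegree_iff 1).2 hb) (add_mem ha' ha')

noncomputable def quarticPart : ↥(𝓟 3) × ↥(𝓟 3) →ₗ[ℂ] MP :=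
  homogeneousComponent 4 ∘ₗ shearedNumerator ∘ₗ (𝓟 3).subtype.prodMap (𝓟 3).subtype

theorem shearedNumerator_mem_range_quarticPart {a b : MP} (ha : a ∈ 𝓟 3) (hb : b ∈ 𝓟 3)
    (h : (shearedNumerator (a, b)).IsHomogeneous 4) :
    shearedNumerator (a, b) ∈ LinearMap.range quarticPart :=
  ⟨(⟨a, ha⟩, ⟨b, hb⟩), (homogeneousComponent_of_mem h).trans (if_pos rfl)⟩

theorem monomial_mem_range_quarticPart {m : Fin 2 →₀ ℕ} (hm : m.degree = 4) :
    monomial m 1 ∈ LinearMap.range quarticPart := by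
  have hhom : (monomial m (1 : ℂ)).IsHomogeneous 4 := isHomogeneous_monomial _ hm
  rcases Nat.eq_zero_or_pos (m 1) with h1 | h1
  · have hm : m = Finsupp.single 0 4 := by
      rw [Finsupp.degree_eq_sum, Fin.sum_univ_two, h1, add_zero] at hm
      ext i; fin_cases i <;> simp [hm, h1]
    have e : shearedNumerator (-C (1 / 2 : ℂ) * X 0 ^ 3, 0) = monomial m 1 := by
      have h2 : (2 : MP) * C (1 / 2 : ℂ) = 1 := by
        rw [← map_ofNat C 2, ← C_mul]; norm_num
      rw [shearedNumerator_apply, hm, ← X_pow_eq_monomial]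
      linear_combination (X 0 ^ 4 : MP) * h2
    rw [← e]
    refine shearedNumerator_mem_range_quarticPart ?_ (zero_mem _) (e ▸ hhom)
    rw [neg_mul, C_mul']
    exact neg_mem (Submodule.smul_mem _ _
      ((mem_restrictTotalDegree _ _ _).2 (by rw [totalDegree_X_pow])))
  · obtain ⟨m', rfl⟩ : ∃ m', m = m' + Finsupp.single 1 1 :=
      ⟨m - Finsupp.single 1 1, (tsub_add_cancel_of_le (Finsupp.single_le_iff.2 h1)).symm⟩
    have e : shearedNumerator (0, monomial m' 1) = monomial (m' + Finsupp.single 1 1) 1 := by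
      rw [shearedNumerator_apply, monomial_add_single]; ring
    rw [← e]
    refine shearedNumerator_mem_range_quarticPart (zero_mem _) ?_ (e ▸ hhom)
    rw [map_add, Finsupp.degree_single] at hm
    rw [mem_restrictTotalDegree, totalDegree_monomial _ one_ne_zero]
    change m'.degree ≤ 3
    omega

theorem range_quarticPart :
    LinearMap.range quarticPart = homogeneousSubmodule (Fin 2) ℂ 4 := by
  refine le_antisymm ?_ ?_
  · rintro _ ⟨x, rfl⟩
    exact homogeneousComponent_isHomogeneous _ _
  rw [homogeneousSubmodule_eq_finsupp_supported, AddMonoidAlgebra.supported_eq_span_single,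
    Submodule.span_le]
  rintro _ ⟨m, hm, rfl⟩
  exact monomial_mem_range_quarticPart hm

theorem shearedSectionSpace_eq_map_ker :
    shearedSectionSpace =
      (LinearMap.ker quarticPart).map ((𝓟 3).subtype.prodMap (𝓟 3).subtype) := by
  ext ⟨a, b⟩
  constructor
  · rintro ⟨⟨ha, hb⟩, hq⟩
    exact ⟨(⟨a, ha⟩, ⟨b, hb⟩), homogeneousComponent_eq_zero _ _
      (Nat.lt_succ_of_le ((mem_restrictTotalDegree _ _ _).1 hq)), rfl⟩
  · rintro ⟨⟨⟨a, ha⟩, ⟨b, hb⟩⟩, hker, he⟩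
    cases he
    exact ⟨⟨ha, hb⟩, mem_restrictTotalDegree_of_homogeneousComponent_eq_zero
      (shearedNumerator_mem ha hb) hker⟩

theorem finrank_shearedSectionSpace : finrank ℂ shearedSectionSpace = 15 := by
  have hι : Function.Injective ((𝓟 3).subtype.prodMap (𝓟 3).subtype) :=
    Prod.map_injective.2 ⟨Subtype.val_injective, Subtype.val_injective⟩
  have hcubics : finrank ℂ (𝓟 3) = 10 := by rw [finrank_restrictTotalDegree]; decide
  have hquartics : finrank ℂ (homogeneousSubmodule (Fin 2) ℂ 4) = 5 := by
    rw [finrank_homogeneousSubmodule]; decide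
  have hrank := quarticPart.finrank_range_add_finrank_ker
  rw [range_quarticPart, hquartics, Module.finrank_prod, hcubics] at hrank
  rw [shearedSectionSpace_eq_map_ker, ← (Submodule.equivMapOfInjective _ hι _).finrank_eq]
  omega

/-- Example 7.3: global sections of `φ_*O_X(4,2)`.  The set of pairs
`(s₁, s₂)` of polynomials in `ℂ[u,v]` such that both entries of `G~ · (s₁, s₂)ᵗ` lie in `R₁`
is a `ℂ`-linear subspace of `ℂ[u,v] × ℂ[u,v]` of dimension `15`. -/
theorem stmt12 :
    ∃ S : Submodule ℂ (MvPolynomial (Fin 2) ℂ × MvPolynomial (Fin 2) ℂ),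
      (↑S : Set (MvPolynomial (Fin 2) ℂ × MvPolynomial (Fin 2) ℂ)) =
        {p | ∀ i : Fin 2,
          Gt.mulVec ![algebraMap (MvPolynomial (Fin 2) ℂ) KK p.1,
                      algebraMap (MvPolynomial (Fin 2) ℂ) KK p.2] i ∈ R₁} ∧
      Module.finrank ℂ S = 15 := by
  refine ⟨shearedSectionSpace.comap shear.toLinearMap, ?_, ?_⟩
  · ext s
    simp only [SetLike.mem_coe, Submodule.mem_comap, Set.mem_ofPred_eq, Gt_mulVec,
      Fin.forall_fin_two, cons_val_zero, cons_val_one, div_vv_pow_mem_R₁_iff]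
    exact shear_mem_shearedSectionSpace_iff s
  · rw [Submodule.comap_equiv_eq_map_symm, LinearEquiv.finrank_map_eq,
      finrank_shearedSectionSpace]
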